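/- A Tanner graph T of a BATS code cannot be reduced to the empty graph by BP (peeling) decoding — i.e., there exists no ordering v_1,…,v_K of all K VNs such that for every t ∈ {1,…,K} some batch i satisfies v_t ∈ R_i(t) and rank(G_i^{(R_i(t))} H_i) = |R_i(t)|, where R_i(t) = Neib(C_i) ∖ {v_1,…,v_{t−1}} — if and only if T is a stopping graph, i.e., there exist a non-empty set A of VNs and a (possibly empty) set B of B-CNs such that (A, B) is valid for T. -/

import Mathlib

/-- The rank of a B-CN restricted to a subset `S` of the variable nodes:
`rk(C^{(S)}) = rank(G^{(S)} · H)` where `G^{(S)}` is the row-submatrix of `G`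
formed by the rows indexed by `S`. -/
noncomputable def batchRank {F : Type*} [Field F] {K M Ni : ℕ}
    (G : Matrix (Fin K) (Fin M) F) (H : Matrix (Fin M) (Fin Ni) F)
    (S : Finset (Fin K)) : ℕ :=
  ((G.submatrix (fun v : {x // x ∈ S} => v.1) id) * H).rank

/-- A parameter pair `(A, B)` of a set of VNs and a set of B-CNs is *valid*
for the Tanner graph of a BATS code:
(C1) every B-CN neighbour of every VN in `A` lies in `B`;
(C2) for every `C ∈ B`, `|Neib(C) ∩ A| > rk(C^{(Neib(C) ∩ A)})`;
(C3) every VN not in `A` has at least one B-CN neighbour outside `B`. -/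
def ValidPair {F : Type*} [Field F] {K M n : ℕ} (N : Fin n → ℕ)
    (Neib : Fin n → Finset (Fin K))
    (G : Fin n → Matrix (Fin K) (Fin M) F)
    (H : (i : Fin n) → Matrix (Fin M) (Fin (N i)) F)
    (A : Finset (Fin K)) (B : Finset (Fin n)) : Prop :=
  (∀ v ∈ A, ∀ i : Fin n, v ∈ Neib i → i ∈ B) ∧
  (∀ i ∈ B, batchRank (G i) (H i) (Neib i ∩ A) < (Neib i ∩ A).card) ∧
  (∀ v : Fin K, v ∉ A → ∃ i : Fin n, i ∉ B ∧ v ∈ Neib i)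


/-! A valid pair `(A, B)` with `A ≠ ∅` blocks decoding: when the first VN of `A` is decoded through
a batch `C`, condition (C1) puts `C` in `B`, and the residual of `C` then still contains
`Neib(C) ∩ A`; but full row rank passes to subsets of rows, contradicting (C2).

Conversely, decode greedily. Whenever decoding gets stuck with a non-empty set `A` of undecoded VNs,
take for `B` the batches whose residual is rank-deficient. A VN outside `A` was decoded through
some batch whose residual has only shrunk since, so that batch still has full rank and lies
outside `B`; hence `(A, B)` is valid. -/

open Finset

theorem Matrix.rank_submatrix_eq_card_of_rank_eq_card {F m₀ m₁ n : Type*} [Field F]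
    [Fintype m₀] [Fintype m₁] [Fintype n] {A : Matrix m₀ n F}
    (hA : A.rank = Fintype.card m₀) {f : m₁ → m₀} (hf : Function.Injective f) :
    (A.submatrix f id).rank = Fintype.card m₁ := by
  have hrows : LinearIndependent F A.row := by
    rw [linearIndependent_iff_card_eq_finrank_span, Set.finrank, ← A.rank_eq_finrank_span_row, hA]
  exact (hrows.comp f hf).rank_matrix

section BatchRank

variable {F : Type*} [Field F] {K M Ni : ℕ} (G : Matrix (Fin K) (Fin M) F)
  (H : Matrix (Fin M) (Fin Ni) F)

theorem batchRank_eq_rank_submatrix_mul (S : Finset (Fin K)) :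
    batchRank G H S = ((G * H).submatrix ((↑) : S → Fin K) id).rank := by
  rw [Matrix.submatrix_mul G H _ id id Function.bijective_id, Matrix.submatrix_id_id, batchRank]

theorem batchRank_le_card (S : Finset (Fin K)) : batchRank G H S ≤ #S :=
  (Matrix.rank_le_card_height _).trans_eq (Fintype.card_coe S)

variable {G H}

theorem batchRank_eq_card_of_subset {S T : Finset (Fin K)} (hST : S ⊆ T)
    (hT : batchRank G H T = #T) : batchRank G H S = #S := by
  rw [batchRank_eq_rank_submatrix_mul, ← Fintype.card_coe] at hT ⊢
  have hincl : Function.Injective fun v : S => (⟨v, hST v.2⟩ : T) :=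
    fun _ _ h => Subtype.ext (Subtype.mk.inj h)
  have hS := Matrix.rank_submatrix_eq_card_of_rank_eq_card hT hincl
  rwa [Matrix.submatrix_submatrix] at hS

end BatchRank

section Peeling

variable {F : Type*} [Field F] {K M n : ℕ} {N : Fin n → ℕ} {Neib : Fin n → Finset (Fin K)}
  {G : Fin n → Matrix (Fin K) (Fin M) F} {H : (i : Fin n) → Matrix (Fin M) (Fin (N i)) F}

variable (Neib G H) in
/-- With `P` the set of VNs decoded before step `t`, `Neib i \ P` is the paper's `R_i(t)`. -/
def IsPeelable (P : Finset (Fin K)) (v : Fin K) : Prop :=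
  ∃ i, v ∈ Neib i \ P ∧ batchRank (G i) (H i) (Neib i \ P) = #(Neib i \ P)

def peeledSet (σ : Equiv.Perm (Fin K)) (t : Fin K) : Finset (Fin K) :=
  (univ.filter fun s => s < t).image σ

theorem mem_peeledSet {σ : Equiv.Perm (Fin K)} {t : Fin K} {v : Fin K} :
    v ∈ peeledSet σ t ↔ ∃ s < t, σ s = v := by
  simp [peeledSet]

theorem apply_notMem_peeledSet (σ : Equiv.Perm (Fin K)) (t : Fin K) : σ t ∉ peeledSet σ t := by
  simp [mem_peeledSet]

theorem peeledSet_mono (σ : Equiv.Perm (Fin K)) {s t : Fin K} (hst : s ≤ t) :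
    peeledSet σ s ⊆ peeledSet σ t :=
  image_subset_image (monotone_filter_right _ fun _ _ h => h.trans_le hst)

theorem ValidPair.not_isPeelable {A : Finset (Fin K)} {B : Finset (Fin n)}
    (hAB : ValidPair N Neib G H A B) {P : Finset (Fin K)} (hAP : Disjoint A P) {v : Fin K}
    (hv : v ∈ A) : ¬ IsPeelable Neib G H P v := by
  rintro ⟨i, hvi, hfull⟩
  have hiB : i ∈ B := hAB.1 v hv i (mem_sdiff.1 hvi).1
  have hsub : Neib i ∩ A ⊆ Neib i \ P := fun w hw =>
    mem_sdiff.2 ⟨(mem_inter.1 hw).1, disjoint_left.1 hAP (mem_inter.1 hw).2⟩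
  exact (hAB.2.1 i hiB).ne (batchRank_eq_card_of_subset hsub hfull)

theorem not_exists_peeling_of_validPair {A : Finset (Fin K)} {B : Finset (Fin n)}
    (hA : A.Nonempty) (hAB : ValidPair N Neib G H A B) :
    ¬ ∃ σ : Equiv.Perm (Fin K), ∀ t, IsPeelable Neib G H (peeledSet σ t) (σ t) := by
  rintro ⟨σ, hσ⟩
  have hA' : (A.image σ.symm).Nonempty := hA.image _
  set t₀ := (A.image σ.symm).min' hA'
  have ht₀ : σ t₀ ∈ A := by
    obtain ⟨a, ha, hat⟩ := mem_image.1 ((A.image σ.symm).min'_mem hA')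
    rw [show t₀ = σ.symm a from hat.symm, Equiv.apply_symm_apply]
    exact ha
  have hdisj : Disjoint A (peeledSet σ t₀) := by
    refine disjoint_right.2 fun w hw hwA => ?_
    obtain ⟨s, hs, rfl⟩ := mem_peeledSet.1 hw
    exact hs.not_ge ((A.image σ.symm).min'_le s (mem_image.2 ⟨σ s, hwA, σ.symm_apply_apply s⟩))
  exact hAB.not_isPeelable hdisj ht₀ (hσ t₀)

theorem validPair_compl_of_forall_not_isPeelable {P : Finset (Fin K)}
    (hdecoded : ∀ v ∈ P, ∃ i, v ∈ Neib i ∧ batchRank (G i) (H i) (Neib i \ P) = #(Neib i \ P))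
    (hstuck : ∀ v ∉ P, ¬ IsPeelable Neib G H P v) :
    ValidPair N Neib G H Pᶜ
      (univ.filter fun i => batchRank (G i) (H i) (Neib i \ P) < #(Neib i \ P)) := by
  refine ⟨fun v hv i hvi => ?_, fun i hi => ?_, fun v hv => ?_⟩
  · have hv : v ∉ P := mem_compl.1 hv
    refine mem_filter.2 ⟨mem_univ _, (batchRank_le_card _ _ _).lt_of_ne fun hfull => ?_⟩
    exact hstuck v hv ⟨i, mem_sdiff.2 ⟨hvi, hv⟩, hfull⟩
  · rw [← sdiff_eq_inter_compl]
    exact (mem_filter.1 hi).2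
  · obtain ⟨i, hvi, hfull⟩ := hdecoded v (by simpa using hv)
    exact ⟨i, fun hi => (mem_filter.1 hi).2.ne hfull, hvi⟩

theorem exists_batchRank_eq_card_of_mem_peeledSet {σ : Equiv.Perm (Fin K)} {t : Fin K}
    (hσ : ∀ s < t, IsPeelable Neib G H (peeledSet σ s) (σ s)) {v : Fin K}
    (hv : v ∈ peeledSet σ t) :
    ∃ i, v ∈ Neib i ∧
      batchRank (G i) (H i) (Neib i \ peeledSet σ t) = #(Neib i \ peeledSet σ t) := by
  obtain ⟨s, hst, rfl⟩ := mem_peeledSet.1 hv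
  obtain ⟨i, hsi, hfull⟩ := hσ s hst
  exact ⟨i, (mem_sdiff.1 hsi).1,
    batchRank_eq_card_of_subset (sdiff_subset_sdiff subset_rfl (peeledSet_mono σ hst.le)) hfull⟩

theorem swap_mul_apply_of_lt {σ : Equiv.Perm (Fin K)} {t : Fin K} {v : Fin K}
    (hv : v ∉ peeledSet σ t) {s : Fin K} (hst : s < t) : (Equiv.swap (σ t) v * σ) s = σ s := by
  refine Equiv.swap_apply_of_ne_of_ne (σ.injective.ne hst.ne) fun hsv => hv ?_
  exact mem_peeledSet.2 ⟨s, hst, hsv⟩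

theorem peeledSet_swap_mul_of_le {σ : Equiv.Perm (Fin K)} {t : Fin K} {v : Fin K}
    (hv : v ∉ peeledSet σ t) {s : Fin K} (hst : s ≤ t) :
    peeledSet (Equiv.swap (σ t) v * σ) s = peeledSet σ s :=
  image_congr fun _ hr => swap_mul_apply_of_lt hv ((mem_filter.1 hr).2.trans_le hst)

/-- The inductive step swaps a decodable VN into position `k`. -/
theorem exists_perm_isPeelable_of_le
    (hstop : ∀ (A : Finset (Fin K)) (B : Finset (Fin n)), A.Nonempty → ¬ ValidPair N Neib G H A B) :
    ∀ k ≤ K, ∃ σ : Equiv.Perm (Fin K), ∀ t : Fin K, (t : ℕ) < k →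
      IsPeelable Neib G H (peeledSet σ t) (σ t) := by
  intro k
  induction k with
  | zero => exact fun _ => ⟨1, fun t ht => absurd ht (Nat.not_lt_zero _)⟩
  | succ k ih =>
    intro hk
    obtain ⟨σ, hσ⟩ := ih (by omega)
    set k' : Fin K := ⟨k, hk⟩
    obtain ⟨v, hvP, hv⟩ : ∃ v ∉ peeledSet σ k', IsPeelable Neib G H (peeledSet σ k') v := by
      by_contra! hstuck
      exact hstop _ _ ⟨σ k', mem_compl.2 (apply_notMem_peeledSet σ k')⟩
        (validPair_compl_of_forall_not_isPeelable
          (fun w hw => exists_batchRank_eq_card_of_mem_peeledSet (fun s hs => hσ s hs) hw) hstuck)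
    refine ⟨Equiv.swap (σ k') v * σ, fun t ht => ?_⟩
    rw [peeledSet_swap_mul_of_le hvP (show t ≤ k' from Nat.lt_succ_iff.1 ht)]
    rcases (Nat.lt_succ_iff.1 ht).lt_or_eq with htk | htk
    · rw [swap_mul_apply_of_lt hvP htk]
      exact hσ t htk
    · obtain rfl : t = k' := Fin.ext htk
      simpa using hv

end Peeling

theorem bp_decoding_fails_iff_stopping_graph_general {F : Type*} [Field F] {K M n : ℕ}
    (N : Fin n → ℕ) (Neib : Fin n → Finset (Fin K))
    (G : Fin n → Matrix (Fin K) (Fin M) F)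
    (H : (i : Fin n) → Matrix (Fin M) (Fin (N i)) F) :
    (¬ ∃ σ : Equiv.Perm (Fin K), ∀ t : Fin K, ∃ i : Fin n,
        σ t ∈ Neib i \ (Finset.univ.filter (fun s => s < t)).image σ ∧
        batchRank (G i) (H i) (Neib i \ (Finset.univ.filter (fun s => s < t)).image σ)
          = (Neib i \ (Finset.univ.filter (fun s => s < t)).image σ).card) ↔
    ∃ (A : Finset (Fin K)) (B : Finset (Fin n)),
      A.Nonempty ∧ ValidPair N Neib G H A B := by
  change (¬ ∃ σ : Equiv.Perm (Fin K), ∀ t, IsPeelable Neib G H (peeledSet σ t) (σ t)) ↔ _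
  constructor
  · intro hfail
    by_contra! hstop
    obtain ⟨σ, hσ⟩ := exists_perm_isPeelable_of_le hstop K le_rfl
    exact hfail ⟨σ, fun t => hσ t t.isLt⟩
  · rintro ⟨A, B, hA, hAB⟩
    exact not_exists_peeling_of_validPair hA hAB

/-- The Tanner graph of a BATS code cannot be reduced to the empty graph by
BP (peeling) decoding — i.e. there is no ordering `σ 0, σ 1, …` of the `K` VNs
such that for every step `t` some batch `i` satisfies
`σ t ∈ R i t` and `rank(G_i^{(R i t)} · H_i) = |R i t|`, where
`R i t = Neib(C_i) \ {σ s : s < t}` — if and only if the graph is a stopping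
graph, i.e. there exist a non-empty set `A` of VNs and a (possibly empty) set
`B` of B-CNs such that `(A, B)` is valid. -/
theorem bp_decoding_fails_iff_stopping_graph {F : Type*} [Field F] {K M n : ℕ}
    (hK : 0 < K) (hM : 0 < M) (hn : 0 < n)
    (N : Fin n → ℕ) (Neib : Fin n → Finset (Fin K))
    (G : Fin n → Matrix (Fin K) (Fin M) F)
    (H : (i : Fin n) → Matrix (Fin M) (Fin (N i)) F) :
    (¬ ∃ σ : Equiv.Perm (Fin K), ∀ t : Fin K, ∃ i : Fin n,
        σ t ∈ Neib i \ (Finset.univ.filter (fun s => s < t)).image σ ∧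
        batchRank (G i) (H i) (Neib i \ (Finset.univ.filter (fun s => s < t)).image σ)
          = (Neib i \ (Finset.univ.filter (fun s => s < t)).image σ).card) ↔
    ∃ (A : Finset (Fin K)) (B : Finset (Fin n)),
      A.Nonempty ∧ ValidPair N Neib G H A B :=
  bp_decoding_fails_iff_stopping_graph_general N Neib G H
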